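/- arXiv:1708.02456 — 12 statements merged into one kernel-verified Lean document; each statement's English description precedes it below -/
import Mathlib

section
/- Let u : ℝ → ℤ → ℝ be such that for each n the map t ↦ u t n is differentiable and satisfies the modified Ito–Narita–Bogoyavlensky equation u̇ₙ = uₙ(uₙ₊₂uₙ₊₁ − uₙ₋₁uₙ₋₂). Define v t n = u t (n+1) · u t n. Then v satisfies the Ito–Narita–Bogoyavlensky equation v̇ₙ = vₙ(vₙ₊₂ + vₙ₊₁ − vₙ₋₁ − vₙ₋₂). -/
/-! Differentiating `vₙ = uₙ₊₁uₙ` by the Leibniz rule and substituting the modified INB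
equation for `u̇ₙ₊₁` and `u̇ₙ` gives `vₙ` times a difference of products of neighbouring
`u`'s, and these products are exactly `vₙ₊₂, vₙ₊₁, vₙ₋₁, vₙ₋₂`. -/

def modINBField {R : Type*} [CommRing R] (u : ℤ → R) (n : ℤ) : R :=
  u n * (u (n + 2) * u (n + 1) - u (n - 1) * u (n - 2))

def inbField {R : Type*} [CommRing R] (v : ℤ → R) (n : ℤ) : R :=
  v n * (v (n + 2) + v (n + 1) - v (n - 1) - v (n - 2))

theorem modINBField_leibniz_eq_inbField {R : Type*} [CommRing R] (u : ℤ → R) (n : ℤ) :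
    modINBField u (n + 1) * u n + u (n + 1) * modINBField u n =
      inbField (fun m => u (m + 1) * u m) n := by
  simp only [modINBField, inbField]
  ring_nf

/-- Transformation T2 (v̂ₙ = uₙ₊₁uₙ) maps the modified INB equation (E9)
to the Ito–Narita–Bogoyavlensky equation (1.3). -/
theorem stmt_0 (u v : ℝ → ℤ → ℝ)
    (hu : ∀ t n, HasDerivAt (fun s => u s n)
      (u t n * (u t (n + 2) * u t (n + 1) - u t (n - 1) * u t (n - 2))) t)
    (hv : ∀ t n, v t n = u t (n + 1) * u t n) :
    ∀ t n, HasDerivAt (fun s => v s n)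
      (v t n * (v t (n + 2) + v t (n + 1) - v t (n - 1) - v t (n - 2))) t := by
  intro t n
  have hv_fun : v = fun s m => u s (m + 1) * u s m := funext₂ hv
  subst hv_fun
  have h : HasDerivAt (fun s => u s (n + 1) * u s n)
      (modINBField (u t) (n + 1) * u t n + u t (n + 1) * modINBField (u t) n) t :=
    (hu t (n + 1)).mul (hu t n)
  rw [modINBField_leibniz_eq_inbField] at h
  exact h
end

section
/- Let a ∈ ℝ and let u : ℝ → ℤ → ℝ be differentiable in t and satisfy u̇ₙ = (uₙ₊₁ − uₙ + a)(uₙ − uₙ₋₁ + a)(uₙ₊₂ − uₙ₊₁ + uₙ₋₁ − uₙ₋₂ + 2a) + b for some constant b ∈ ℝ. Define v t n = u t (n+1) − u t n + a. Then v satisfies v̇ₙ = vₙ(vₙ₊₂vₙ₊₁ − vₙ₋₁vₙ₋₂). -/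
/-!
Writing `vₙ = uₙ₊₁ − uₙ + a`, the second factor of (E10) is `vₙ₋₁` and the third is `vₙ₊₁ + vₙ₋₂`,
so `u̇ₙ = Jₙ + b` with the flux `Jₙ = vₙ vₙ₋₁ (vₙ₊₁ + vₙ₋₂)` (`latticeFlux`). Hence `v̇ₙ = Jₙ₊₁ − Jₙ`, and the cross terms
`vₙ₊₁ vₙ vₙ₋₁` cancel in this difference, leaving `vₙ (vₙ₊₂ vₙ₊₁ − vₙ₋₁ vₙ₋₂)`.
-/

def latticeFlux (v : ℤ → ℝ) (n : ℤ) : ℝ :=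
  v n * v (n - 1) * (v (n + 1) + v (n - 2))

theorem latticeFlux_succ_sub (v : ℤ → ℝ) (n : ℤ) :
    latticeFlux v (n + 1) - latticeFlux v n =
      v n * (v (n + 2) * v (n + 1) - v (n - 1) * v (n - 2)) := by
  simp only [latticeFlux, show n + 1 - 1 = n by ring, show n + 1 + 1 = n + 2 by ring,
    show n + 1 - 2 = n - 1 by ring]
  ring

theorem hasDerivAt_forward_diff_add_const {u : ℝ → ℤ → ℝ} {u' : ℤ → ℝ} {t : ℝ} (a : ℝ) (n : ℤ)
    (hu : ∀ m, HasDerivAt (fun s => u s m) (u' m) t) :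
    HasDerivAt (fun s => u s (n + 1) - u s n + a) (u' (n + 1) - u' n) t :=
  ((hu (n + 1)).sub (hu n)).add_const a

/-- Transformation T1 (v̂ₙ = uₙ₊₁ − uₙ + a) maps equation (E10) to equation (E9). -/
theorem stmt_1 (a b : ℝ) (u v : ℝ → ℤ → ℝ)
    (hu : ∀ t n, HasDerivAt (fun s => u s n)
      ((u t (n + 1) - u t n + a) * (u t n - u t (n - 1) + a) *
        (u t (n + 2) - u t (n + 1) + u t (n - 1) - u t (n - 2) + 2 * a) + b) t)
    (hv : ∀ t n, v t n = u t (n + 1) - u t n + a) :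
    ∀ t n, HasDerivAt (fun s => v s n)
      (v t n * (v t (n + 2) * v t (n + 1) - v t (n - 1) * v t (n - 2))) t := by
  intro t n
  have hu_flux : ∀ m, HasDerivAt (fun s => u s m) (latticeFlux (v t) m + b) t := by
    intro m
    convert hu t m using 1
    simp only [latticeFlux, hv, show m - 1 + 1 = m by ring, show m + 1 + 1 = m + 2 by ring,
      show m - 2 + 1 = m - 1 by ring]
    ring
  have hv_fun : (fun s => v s n) = fun s => u s (n + 1) - u s n + a := funext fun s => hv s n
  rw [hv_fun, ← latticeFlux_succ_sub, ← add_sub_add_right_eq_sub _ _ b]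
  exact hasDerivAt_forward_diff_add_const a n hu_flux
end

section
/- Let u : ℝ → ℤ → ℝ be differentiable in t and satisfy u̇ₙ = uₙ₊₁uₙ²uₙ₋₁(uₙ₊₂ − uₙ₋₂). Define v t n = u t (n+1) · u t (n−1). Then v satisfies v̇ₙ = vₙ[vₙ₊₁(vₙ₊₂ − vₙ) + vₙ₋₁(vₙ − vₙ₋₂)]. -/
/-- Transformation T4 (v̂ₙ = uₙ₊₁uₙ₋₁) maps equation (E2) to equation (E1). -/
theorem stmt_2 (u v : ℝ → ℤ → ℝ)
    (hu : ∀ t n, HasDerivAt (fun s => u s n)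
      (u t (n + 1) * (u t n) ^ 2 * u t (n - 1) * (u t (n + 2) - u t (n - 2))) t)
    (hv : ∀ t n, v t n = u t (n + 1) * u t (n - 1)) :
    ∀ t n, HasDerivAt (fun s => v s n)
      (v t n * (v t (n + 1) * (v t (n + 2) - v t n) + v t (n - 1) * (v t n - v t (n - 2)))) t := by
  intro t n
  have product_rule : HasDerivAt (fun s => u s (n + 1) * u s (n - 1)) _ t :=
    (hu t (n + 1)).mul (hu t (n - 1))
  rw [show (fun s => v s n) = fun s => u s (n + 1) * u s (n - 1) from funext fun s => hv s n]
  convert product_rule using 1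
  simp only [hv]
  -- `ring_nf` also normalizes the shifted indices such as `n + 1 + 2` and `n - 1 - 1`.
  ring_nf
end

section
/- Let u : ℝ → ℤ → ℝ be differentiable in t and satisfy u̇ₙ = uₙ[uₙ₊₁(uₙ₊₂ − uₙ) + uₙ₋₁(uₙ − uₙ₋₂)]. Define v t n = u t (n+1) · u t n. Then v satisfies the double Volterra equation v̇ₙ = vₙ(vₙ₊₂ − vₙ₋₂). -/
/-! The logarithmic derivative `u̇ₙ / uₙ` of a solution of (E1) is
`uₙ₊₁uₙ₊₂ - uₙ₊₁uₙ + uₙ₋₁uₙ - uₙ₋₁uₙ₋₂`, so in `v̇ₙ / vₙ = u̇ₙ₊₁ / uₙ₊₁ + u̇ₙ / uₙ` everything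
cancels except `uₙ₊₃uₙ₊₂ - uₙ₋₁uₙ₋₂ = vₙ₊₂ - vₙ₋₂`. Multiplied out, this needs no division. -/

/-- The right-hand side of equation (E1). -/
def e1Field (w : ℤ → ℝ) (n : ℤ) : ℝ :=
  w n * (w (n + 1) * (w (n + 2) - w n) + w (n - 1) * (w n - w (n - 2)))

theorem e1Field_succ_mul_add_mul_e1Field (w : ℤ → ℝ) (n : ℤ) :
    e1Field w (n + 1) * w n + w (n + 1) * e1Field w n =
      w (n + 1) * w n * (w (n + 3) * w (n + 2) - w (n - 1) * w (n - 2)) := by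
  simp only [e1Field, show n + 1 + 1 = n + 2 by ring, show n + 1 + 2 = n + 3 by ring,
    show n + 1 - 1 = n by ring, show n + 1 - 2 = n - 1 by ring]
  ring

/-- Transformation T2 maps equation (E1) to the double Volterra equation (3.5). -/
theorem stmt_3 (u v : ℝ → ℤ → ℝ)
    (hu : ∀ t n, HasDerivAt (fun s => u s n)
      (u t n * (u t (n + 1) * (u t (n + 2) - u t n) + u t (n - 1) * (u t n - u t (n - 2)))) t)
    (hv : ∀ t n, v t n = u t (n + 1) * u t n) :
    ∀ t n, HasDerivAt (fun s => v s n) (v t n * (v t (n + 2) - v t (n - 2))) t := by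
  intro t n
  have hprod : HasDerivAt (fun s => u s (n + 1) * u s n)
      (e1Field (u t) (n + 1) * u t n + u t (n + 1) * e1Field (u t) n) t :=
    (hu t (n + 1)).mul (hu t n)
  rw [e1Field_succ_mul_add_mul_e1Field] at hprod
  convert hprod using 1
  · exact funext fun s => hv s n
  · rw [hv t n, hv t (n + 2), hv t (n - 2), show n + 2 + 1 = n + 3 by ring,
      show n - 2 + 1 = n - 1 by ring]
end

section
/- Let u : ℝ → ℤ → ℝ be differentiable in t and satisfy u̇ₙ = uₙ₊₁uₙ³uₙ₋₁(uₙ₊₂uₙ₊₁ − uₙ₋₁uₙ₋₂) − uₙ²(uₙ₊₁ − uₙ₋₁). Define v t n = u t (n+1) · u t n. Then v satisfies the discrete Sawada–Kotera equation v̇ₙ = vₙ²(vₙ₊₂vₙ₊₁ − vₙ₋₁vₙ₋₂) − vₙ(vₙ₊₁ − vₙ₋₁). -/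
/-- Transformation T2 maps equation (E14) to the discrete Sawada–Kotera equation (3.14). -/
theorem stmt_5 (u v : ℝ → ℤ → ℝ)
    (hu : ∀ t n, HasDerivAt (fun s => u s n)
      (u t (n + 1) * (u t n) ^ 3 * u t (n - 1) *
        (u t (n + 2) * u t (n + 1) - u t (n - 1) * u t (n - 2)) -
        (u t n) ^ 2 * (u t (n + 1) - u t (n - 1))) t)
    (hv : ∀ t n, v t n = u t (n + 1) * u t n) :
    ∀ t n, HasDerivAt (fun s => v s n)
      ((v t n) ^ 2 * (v t (n + 2) * v t (n + 1) - v t (n - 1) * v t (n - 2)) -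
        v t n * (v t (n + 1) - v t (n - 1))) t := by
  intro t n
  have h : HasDerivAt (fun s => u s (n + 1) * u s n) _ t := (hu t (n + 1)).mul (hu t n)
  have hfun : (fun s => v s n) = (fun s => u s (n + 1) * u s n) := by
    funext s; exact hv s n
  rw [hfun]
  convert h using 1
  simp only [hv, show n + 1 + 1 = n + 2 from by ring, show n + 1 - 1 = n from by ring,
    show n + 1 + 2 = n + 3 from by ring, show n + 2 + 1 = n + 3 from by ring,
    show n - 1 + 1 = n from by ring, show n - 2 + 1 = n - 1 from by ring]
  ring_nf
end

section
/- Let a ∈ ℝ and let u : ℝ → ℤ → ℝ be differentiable in t and satisfy u̇ₙ = uₙ(uₙ₊₁uₙ − a)(uₙuₙ₋₁ − a)(uₙ₊₂uₙ₊₁ − uₙ₋₁uₙ₋₂). Define v t n = u t (n+1) · u t n − a. Then v satisfies v̇ₙ = (vₙ² + a vₙ)(vₙ₊₂vₙ₊₁ − vₙ₋₁vₙ₋₂). -/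
/-!
Written in the variables `vₙ = uₙ₊₁uₙ - a`, equation (E11) reads
`u̇ₙ = uₙ vₙ vₙ₋₁ (vₙ₊₁ - vₙ₋₂)`. By the product rule
`v̇ₙ = u̇ₙ₊₁uₙ + uₙ₊₁u̇ₙ = uₙ₊₁uₙ vₙ (vₙ₊₂vₙ₊₁ - vₙ₊₁vₙ₋₁ + vₙ₊₁vₙ₋₁ - vₙ₋₁vₙ₋₂)`,
where the middle terms cancel and `uₙ₊₁uₙ = vₙ + a`.
-/

/-- Transformation T3 (v̂ₙ = uₙ₊₁uₙ − a) maps equation (E11) to equation (3.12). -/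
theorem stmt_6 (a : ℝ) (u v : ℝ → ℤ → ℝ)
    (hu : ∀ t n, HasDerivAt (fun s => u s n)
      (u t n * (u t (n + 1) * u t n - a) * (u t n * u t (n - 1) - a) *
        (u t (n + 2) * u t (n + 1) - u t (n - 1) * u t (n - 2))) t)
    (hv : ∀ t n, v t n = u t (n + 1) * u t n - a) :
    ∀ t n, HasDerivAt (fun s => v s n)
      (((v t n) ^ 2 + a * v t n) * (v t (n + 2) * v t (n + 1) - v t (n - 1) * v t (n - 2))) t := by
  intro t n
  have hu_v : ∀ m, HasDerivAt (fun s => u s m)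
      (u t m * v t m * v t (m - 1) * (v t (m + 1) - v t (m - 2))) t := by
    intro m
    refine (hu t m).congr_deriv ?_
    simp only [hv, sub_add_cancel, show m + 1 + 1 = m + 2 by ring, show m - 2 + 1 = m - 1 by ring]
    ring
  have hprod : u t (n + 1) * u t n = v t n + a := by rw [hv]; ring
  rw [show (fun s => v s n) = fun s => u s (n + 1) * u s n - a from funext fun s => hv s n]
  refine (((hu_v (n + 1)).mul (hu_v n)).sub_const a).congr_deriv ?_
  simp only [add_sub_cancel_right, show n + 1 + 1 = n + 2 by ring, show n + 1 - 2 = n - 1 by ring]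
  linear_combination v t n * (v t (n + 2) * v t (n + 1) - v t (n - 1) * v t (n - 2)) * hprod
end

section
/- Let a, b, c ∈ ℝ and let u : ℝ → ℤ → ℝ be differentiable in t and satisfy u̇ₙ = (uₙ₊₁ − uₙ + a)(uₙ − uₙ₋₁ + a)(uₙ₊₂ − uₙ₋₂ + 4a + c) + b. Define v t n = u t (n+1) − u t n + a. Then v satisfies v̇ₙ = vₙ[vₙ₊₁(vₙ₊₂ + vₙ₊₁ + vₙ) − vₙ₋₁(vₙ + vₙ₋₁ + vₙ₋₂)] + c′ vₙ(vₙ₊₁ − vₙ₋₁) for some constant c′ depending only on a and c. -/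
/-!
Since `u (n + 2) - u (n - 2) + 4a` telescopes to `v (n + 1) + v n + v (n - 1) + v (n - 2)`, the
equation for `u` reads `u̇ₙ = vₙ vₙ₋₁ (vₙ₊₁ + vₙ + vₙ₋₁ + vₙ₋₂ + c) + b`. Subtracting this at `n`
from the same equation at `n + 1` gives `v̇ₙ`; the cubic terms `± vₙ₋₁ vₙ vₙ₊₁` cancel and the
equation for `v` holds with `c' = c`.
-/

lemma sub_add_eq_sum_of_eq_forward_diff {u v : ℤ → ℝ} {a : ℝ}
    (hv : ∀ n, v n = u (n + 1) - u n + a) (n : ℤ) :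
    u (n + 2) - u (n - 2) + 4 * a = v (n + 1) + v n + v (n - 1) + v (n - 2) := by
  rw [hv, hv, hv, hv, show n + 1 + 1 = n + 2 by ring, sub_add_cancel,
    show n - 2 + 1 = n - 1 by ring]
  ring

lemma hasDerivAt_of_eq_forward_diff {a b c : ℝ} {u v : ℝ → ℤ → ℝ}
    (hu : ∀ t n, HasDerivAt (fun s => u s n)
      ((u t (n + 1) - u t n + a) * (u t n - u t (n - 1) + a) *
        (u t (n + 2) - u t (n - 2) + 4 * a + c) + b) t)
    (hv : ∀ t n, v t n = u t (n + 1) - u t n + a) (t : ℝ) (n : ℤ) :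
    HasDerivAt (fun s => u s n)
      (v t n * v t (n - 1) * (v t (n + 1) + v t n + v t (n - 1) + v t (n - 2) + c) + b) t := by
  convert hu t n using 2
  rw [← sub_add_eq_sum_of_eq_forward_diff (hv t), hv t n, hv t (n - 1), sub_add_cancel]

/-- Transformation T1 maps equation (E5) to an equation of the form (E3),
for some constant c' depending only on a and c. -/
theorem stmt_9 (a b c : ℝ) (u v : ℝ → ℤ → ℝ)
    (hu : ∀ t n, HasDerivAt (fun s => u s n)
      ((u t (n + 1) - u t n + a) * (u t n - u t (n - 1) + a) *
        (u t (n + 2) - u t (n - 2) + 4 * a + c) + b) t)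
    (hv : ∀ t n, v t n = u t (n + 1) - u t n + a) :
    ∃ c' : ℝ, ∀ t n, HasDerivAt (fun s => v s n)
      (v t n * (v t (n + 1) * (v t (n + 2) + v t (n + 1) + v t n) -
        v t (n - 1) * (v t n + v t (n - 1) + v t (n - 2))) +
        c' * v t n * (v t (n + 1) - v t (n - 1))) t := by
  refine ⟨c, fun t n => ?_⟩
  have hdiff : HasDerivAt (fun s => u s (n + 1) - u s n + a) _ t :=
    ((hasDerivAt_of_eq_forward_diff hu hv t (n + 1)).sub
      (hasDerivAt_of_eq_forward_diff hu hv t n)).add_const a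
  rw [show (fun s => v s n) = fun s => u s (n + 1) - u s n + a from funext fun s => hv s n]
  convert hdiff using 1
  rw [add_sub_cancel_right, show n + 1 + 1 = n + 2 by ring, show n + 1 - 2 = n - 1 by ring]
  ring
end

section
/- Let u : ℝ → ℤ → ℝ be differentiable in t and satisfy u̇ₙ = uₙ[uₙ₊₁(uₙ₊₂ − uₙ₊₁ + uₙ) − uₙ₋₁(uₙ − uₙ₋₁ + uₙ₋₂)]. Define v s n = (−1)ⁿ · u (−s) n. Then v satisfies v̇ₙ = vₙ[vₙ₊₁(vₙ₊₂ + vₙ₊₁ + vₙ) − vₙ₋₁(vₙ + vₙ₋₁ + vₙ₋₂)], where v̇ₙ is the derivative with respect to s. -/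
/-- The invertible non-autonomous point transformation T7 (ûₙ = (−1)ⁿuₙ, t̂ = −t)
relates equation (E6) to equation (E3) with c = 0. -/
theorem stmt_10 (u v : ℝ → ℤ → ℝ)
    (hu : ∀ t n, HasDerivAt (fun s => u s n)
      (u t n * (u t (n + 1) * (u t (n + 2) - u t (n + 1) + u t n) -
        u t (n - 1) * (u t n - u t (n - 1) + u t (n - 2)))) t)
    (hv : ∀ s n, v s n = (-1 : ℝ) ^ n * u (-s) n) :
    ∀ s n, HasDerivAt (fun r => v r n)
      (v s n * (v s (n + 1) * (v s (n + 2) + v s (n + 1) + v s n) -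
        v s (n - 1) * (v s n + v s (n - 1) + v s (n - 2)))) s := by
  intro s n
  have hneg : HasDerivAt (fun r : ℝ => -r) (-1) s := (hasDerivAt_id s).neg
  have h1 : HasDerivAt (fun r => u (-r) n)
      ((u (-s) n * (u (-s) (n + 1) * (u (-s) (n + 2) - u (-s) (n + 1) + u (-s) n) -
        u (-s) (n - 1) * (u (-s) n - u (-s) (n - 1) + u (-s) (n - 2)))) * (-1)) s :=
    (hu (-s) n).comp s hneg
  have h2 : HasDerivAt (fun r => v r n)
      ((-1 : ℝ) ^ n * ((u (-s) n * (u (-s) (n + 1) * (u (-s) (n + 2) - u (-s) (n + 1) + u (-s) n) -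
        u (-s) (n - 1) * (u (-s) n - u (-s) (n - 1) + u (-s) (n - 2)))) * (-1))) s := by
    have : (fun r => v r n) = fun r => (-1 : ℝ) ^ n * u (-r) n := by
      funext r; exact hv r n
    rw [this]
    exact h1.const_mul _
  convert h2 using 1
  have hz : ((-1 : ℝ)) ≠ 0 := by norm_num
  have e1 : ((-1 : ℝ)) ^ (n + 1) = -((-1 : ℝ) ^ n) := by
    rw [zpow_add₀ hz]; simp
  have e2 : ((-1 : ℝ)) ^ (n + 2) = (-1 : ℝ) ^ n := by
    rw [zpow_add₀ hz]; norm_num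
  have e3 : ((-1 : ℝ)) ^ (n - 1) = -((-1 : ℝ) ^ n) := by
    rw [zpow_sub₀ hz, zpow_one]; ring
  have e4 : ((-1 : ℝ)) ^ (n - 2) = (-1 : ℝ) ^ n := by
    rw [zpow_sub₀ hz]; norm_num
  have ha : ((-1 : ℝ) ^ n) = 1 ∨ ((-1 : ℝ) ^ n) = -1 := by
    rcases Int.even_or_odd n with h | h
    · left; exact h.neg_one_zpow
    · right; exact h.neg_one_zpow
  simp only [hv, e1, e2, e3, e4]
  rcases ha with h | h <;> rw [h] <;> ring
end

section
/- Let u : ℝ → ℤ → ℝ be differentiable in t and satisfy u̇ₙ = (uₙ₊₁ + uₙ)(uₙ + uₙ₋₁)(uₙ₊₂ − uₙ₋₂). Define v s n = (−1)ⁿ · u (−s) n. Then v satisfies v̇ₙ = (vₙ₊₁ − vₙ)(vₙ − vₙ₋₁)(vₙ₊₂ − vₙ₋₂), where v̇ₙ is the derivative with respect to s. -/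
/-!
Write `ε = (-1)ⁿ`. Then `v` at the sites `n ± 1` carries the sign `-ε` and at `n ± 2` the sign `ε`,
so the three factors of (E5) for `v` are `-ε`, `ε`, `ε` times the factors `uₙ₊₁ + uₙ`, `uₙ + uₙ₋₁`,
`uₙ₊₂ - uₙ₋₂` of (E8), and their product is `-ε³ = -ε` times the right-hand side of (E8).
This is exactly the factor `ε · (-1)` produced by differentiating `ε · u(-s, n)` in `s`.
-/

lemma neg_one_zpow_add_of_odd {α : Type*} [DivisionRing α] {k : ℤ} (hk : Odd k) (n : ℤ) :
    (-1 : α) ^ (n + k) = -(-1) ^ n := by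
  rw [zpow_add₀ (neg_ne_zero.mpr one_ne_zero), hk.neg_one_zpow, mul_neg_one]

lemma neg_one_zpow_add_of_even {α : Type*} [DivisionRing α] {k : ℤ} (hk : Even k) (n : ℤ) :
    (-1 : α) ^ (n + k) = (-1) ^ n := by
  rw [zpow_add₀ (neg_ne_zero.mpr one_ne_zero), hk.neg_one_zpow, mul_one]

lemma neg_one_zpow_mul_self {α : Type*} [DivisionRing α] (n : ℤ) :
    (-1 : α) ^ n * (-1) ^ n = 1 := by
  rw [← zpow_add₀ (neg_ne_zero.mpr one_ne_zero), ← two_mul, (even_two_mul n).neg_one_zpow]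

lemma staggered_sign_product {R : Type*} [CommRing R] {ε : R} (hε : ε * ε = 1) (a b c d e : R) :
    (-ε * a - ε * b) * (ε * b - -ε * c) * (ε * d - ε * e) =
      ε * ((a + b) * (b + c) * (d - e) * -1) := by
  linear_combination (-ε * ((a + b) * (b + c) * (d - e))) * hε

/-- Transformation T7 relates equation (E8) to equation (E5) with a = b = c = 0. -/
theorem stmt_11 (u v : ℝ → ℤ → ℝ)
    (hu : ∀ t n, HasDerivAt (fun s => u s n)
      ((u t (n + 1) + u t n) * (u t n + u t (n - 1)) * (u t (n + 2) - u t (n - 2))) t)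
    (hv : ∀ s n, v s n = (-1 : ℝ) ^ n * u (-s) n) :
    ∀ s n, HasDerivAt (fun r => v r n)
      ((v s (n + 1) - v s n) * (v s n - v s (n - 1)) * (v s (n + 2) - v s (n - 2))) s := by
  intro s n
  have hv_n : (fun r => v r n) = fun r => (-1 : ℝ) ^ n * u (-r) n := funext (hv · n)
  rw [hv_n]
  refine (((hu (-s) n).comp s (hasDerivAt_neg s)).const_mul ((-1 : ℝ) ^ n)).congr_deriv ?_
  simp only [hv, sub_eq_add_neg n, neg_one_zpow_add_of_odd odd_one,
    neg_one_zpow_add_of_odd odd_one.neg, neg_one_zpow_add_of_even even_two,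
    neg_one_zpow_add_of_even even_two.neg]
  exact (staggered_sign_product (neg_one_zpow_mul_self (α := ℝ) n) _ _ _ _ _).symm
end

section
/- Let a ∈ ℝ, let κ : ℤ → ℝ be the 4-periodic sequence with κ₀ = κ₁ = 1, κ₂ = κ₃ = −1, and let u : ℝ → ℤ → ℝ be differentiable in t and satisfy u̇ₙ = (uₙ² − a²)[(uₙ₊₁² − a²)(uₙ₊₂ − uₙ) + (uₙ₋₁² − a²)(uₙ − uₙ₋₂)]. Define v s n = κₙ · u (−s) n. Then v satisfies v̇ₙ = (vₙ² − a²)[(vₙ₊₁² − a²)(vₙ₊₂ + vₙ) − (vₙ₋₁² − a²)(vₙ + vₙ₋₂)], where v̇ₙ denotes the derivative with respect to s. -/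
/-! Since `κ (n + 2) = -κ n` and `κ n ^ 2 = 1`, substituting `vₙ = κₙ uₙ` turns every factor
`vₘ² - a²` into `uₘ² - a²`, `vₙ₊₂ + vₙ` into `-κₙ (uₙ₊₂ - uₙ)` and `vₙ + vₙ₋₂` into
`κₙ (uₙ - uₙ₋₂)`. So the right-hand side of (E4) (with `c = 0`) at `v` is `-κₙ` times that of
(E7) at `u`, and this sign is exactly the one produced by reversing time. -/

open Function

theorem Function.Periodic.map_emod {α : Type*} {f : ℤ → α} {c : ℤ} (hf : Periodic f c) (n : ℤ) :
    f (n % c) = f n := by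
  rw [Int.emod_def, mul_comm]
  exact hf.sub_int_mul_eq _

section SignPattern

variable {R : Type*} [Ring R] {κ : ℤ → R} (hκ : Periodic κ 4)
  (h0 : κ 0 = 1) (h1 : κ 1 = 1) (h2 : κ 2 = -1) (h3 : κ 3 = -1)
include hκ h0 h1 h2 h3

theorem antiperiodic_two_of_periodic_four : Antiperiodic κ 2 := by
  intro n
  have hshift : (n + 2) % 4 = (n % 4 + 2) % 4 := by omega
  have hlo : 0 ≤ n % 4 := by omega
  have hhi : n % 4 < 4 := by omega
  rw [← hκ.map_emod n, ← hκ.map_emod (n + 2), hshift]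
  generalize n % 4 = r at hlo hhi
  interval_cases r <;> norm_num [h0, h1, h2, h3]

theorem sq_eq_one_of_periodic_four (n : ℤ) : κ n ^ 2 = 1 := by
  have hlo : 0 ≤ n % 4 := by omega
  have hhi : n % 4 < 4 := by omega
  rw [← hκ.map_emod n]
  generalize n % 4 = r at hlo hhi
  interval_cases r <;> norm_num [h0, h1, h2, h3]

end SignPattern

section Lattice

variable {R : Type*} [CommRing R]

def rhsE7 (a : R) (w : ℤ → R) (n : ℤ) : R :=
  (w n ^ 2 - a ^ 2) *
    ((w (n + 1) ^ 2 - a ^ 2) * (w (n + 2) - w n) + (w (n - 1) ^ 2 - a ^ 2) * (w n - w (n - 2)))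

def rhsE4 (a : R) (w : ℤ → R) (n : ℤ) : R :=
  (w n ^ 2 - a ^ 2) *
    ((w (n + 1) ^ 2 - a ^ 2) * (w (n + 2) + w n) - (w (n - 1) ^ 2 - a ^ 2) * (w n + w (n - 2)))

theorem rhsE4_sign_mul {κ : ℤ → R} (hκ : Antiperiodic κ 2) (hsq : ∀ n, κ n ^ 2 = 1)
    (a : R) (w : ℤ → R) (n : ℤ) :
    rhsE4 a (fun m => κ m * w m) n = -(κ n * rhsE7 a w n) := by
  simp only [rhsE4, rhsE7, mul_pow, hsq, one_mul, hκ n, hκ.sub_eq n]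
  ring

end Lattice

theorem hasDerivAt_rhsE4_of_rhsE7 {𝕜 : Type*} [NontriviallyNormedField 𝕜] {κ : ℤ → 𝕜}
    (hκ : Antiperiodic κ 2) (hsq : ∀ n, κ n ^ 2 = 1) {a : 𝕜} {u : 𝕜 → ℤ → 𝕜}
    (hu : ∀ t n, HasDerivAt (fun s => u s n) (rhsE7 a (u t) n) t) (s : 𝕜) (n : ℤ) :
    HasDerivAt (fun r => κ n * u (-r) n) (rhsE4 a (fun m => κ m * u (-s) m) n) s := by
  rw [rhsE4_sign_mul hκ hsq]
  have h := ((hu (-s) n).comp s (hasDerivAt_neg s)).const_mul (κ n)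
  rw [mul_neg_one, mul_neg] at h
  exact h

/-- The non-autonomous point transformation T8 (ûₙ = κₙuₙ, t̂ = −t)
relates equation (E7) to equation (E4) with c = 0. -/
theorem stmt_14 (a : ℝ) (κ : ℤ → ℝ)
    (hκ4 : ∀ n, κ (n + 4) = κ n)
    (hκ0 : κ 0 = 1) (hκ1 : κ 1 = 1) (hκ2 : κ 2 = -1) (hκ3 : κ 3 = -1)
    (u v : ℝ → ℤ → ℝ)
    (hu : ∀ t n, HasDerivAt (fun s => u s n)
      (((u t n) ^ 2 - a ^ 2) *
        (((u t (n + 1)) ^ 2 - a ^ 2) * (u t (n + 2) - u t n) +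
          ((u t (n - 1)) ^ 2 - a ^ 2) * (u t n - u t (n - 2)))) t)
    (hv : ∀ s n, v s n = κ n * u (-s) n) :
    ∀ s n, HasDerivAt (fun r => v r n)
      (((v s n) ^ 2 - a ^ 2) *
        (((v s (n + 1)) ^ 2 - a ^ 2) * (v s (n + 2) + v s n) -
          ((v s (n - 1)) ^ 2 - a ^ 2) * (v s n + v s (n - 2)))) s := by
  obtain rfl : v = fun r m => κ m * u (-r) m := funext fun r => funext (hv r)
  exact hasDerivAt_rhsE4_of_rhsE7 (antiperiodic_two_of_periodic_four hκ4 hκ0 hκ1 hκ2 hκ3)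
    (sq_eq_one_of_periodic_four hκ4 hκ0 hκ1 hκ2 hκ3) hu
end

section
/- Let α : ℝ × ℝ → ℝ be differentiable and define a : ℝ³ → ℝ by a(x, y, z) = α(x, y) · α(y, z). Suppose a is nowhere zero. Then for the shifted quantities aₙ₊₁ = a(uₙ₊₂, uₙ₊₁, uₙ), aₙ = a(uₙ₊₁, uₙ, uₙ₋₁), aₙ₋₁ = a(uₙ, uₙ₋₁, uₙ₋₂), viewed as functions of the independent real variables uₙ₋₂, …, uₙ₊₂, the partial derivative of (aₙ₊₁ · aₙ₋₁)/aₙ with respect to uₙ is identically zero. -/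
/-- If A factorizes as A(x,y,z) = α(x,y)α(y,z), then (aₙ₊₁aₙ₋₁)/aₙ does not
depend on uₙ: its partial derivative with respect to the middle variable is zero. -/
theorem stmt_15 (α : ℝ × ℝ → ℝ) (hα : Differentiable ℝ α)
    (a : ℝ → ℝ → ℝ → ℝ)
    (ha : ∀ x y z, a x y z = α (x, y) * α (y, z))
    (hne : ∀ x y z, a x y z ≠ 0) :
    ∀ v w x y z : ℝ,
      HasDerivAt (fun x' => a v w x' * a x' y z / a w x' y) 0 x := by
  intro v w x y z
  have h : (fun x' => a v w x' * a x' y z / a w x' y)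
      = fun _ => α (v, w) * α (y, z) := by
    funext x'
    have h1 : α (w, x') ≠ 0 := fun h => hne w x' y (by rw [ha, h, zero_mul])
    have h2 : α (x', y) ≠ 0 := fun h => hne w x' y (by rw [ha, h, mul_zero])
    rw [ha, ha, ha]
    field_simp
  rw [h]
  exact hasDerivAt_const x _
end

section
/- Define f, g : (ℤ → ℝ) → ℤ → ℝ by fₙ(u) = uₙ(uₙ₊₂ − uₙ₋₂) and gₙ(u) = uₙ[uₙ₊₂(uₙ₊₄ + uₙ₊₂ + uₙ) − uₙ₋₂(uₙ + uₙ₋₂ + uₙ₋₄)]. Then the two evolutionary flows commute in the formal sense: for every sequence u and every n, Σₖ (∂gₙ/∂uₖ)(u) · fₖ(u) = Σₖ (∂fₙ/∂uₖ)(u) · gₖ(u), where the sums range over the finitely many k on which gₙ and fₙ depend. -/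
private lemma dquad (b c d y : ℝ) :
    deriv (fun x : ℝ => b*x^2 + (c*x + d)) y = 2*b*y + c := by
  have h1 := ((hasDerivAt_pow 2 y).const_mul b).add
    (((hasDerivAt_id y).const_mul c).add (hasDerivAt_const y d))
  have h2 : HasDerivAt (fun x : ℝ => b*x^2 + (c*x + d)) (2*b*y + c) y := by
    have hv : b * ((2:ℕ) * y^(2-1)) + (c*1 + 0) = 2*b*y + c := by push_cast; ring
    rw [← hv]; exact h1
  exact h2.deriv

/-- The flow gₙ = uₙ[uₙ₊₂(uₙ₊₄+uₙ₊₂+uₙ) − uₙ₋₂(uₙ+uₙ₋₂+uₙ₋₄)] is a generalized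
symmetry of the double Volterra equation fₙ = uₙ(uₙ₊₂ − uₙ₋₂): the compatibility
condition D_t gₙ = D_τ fₙ holds identically. -/
theorem stmt_16 (f g : (ℤ → ℝ) → ℤ → ℝ)
    (hf : ∀ u n, f u n = u n * (u (n + 2) - u (n - 2)))
    (hg : ∀ u n, g u n = u n * (u (n + 2) * (u (n + 4) + u (n + 2) + u n) -
      u (n - 2) * (u n + u (n - 2) + u (n - 4)))) :
    ∀ (u : ℤ → ℝ) (n : ℤ),
      ∑ k ∈ Finset.Icc (n - 4) (n + 4),
        deriv (fun x => g (Function.update u k x) n) (u k) * f u k =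
      ∑ k ∈ Finset.Icc (n - 2) (n + 2),
        deriv (fun x => f (Function.update u k x) n) (u k) * g u k := by
  intro u n
  have dg0 : deriv (fun x => g (Function.update u (n - 4) x) n) (u (n - 4)) = 2*(0)*(u (n - 4)) + (-((u n)*(u (n - 2)))) := by
    have e : (fun x => g (Function.update u (n - 4) x) n) = (fun x : ℝ => (0)*x^2 + ((-((u n)*(u (n - 2))))*x + ((u n)*((u (n + 2))*((u (n + 4))+(u (n + 2))+(u n))-(u (n - 2))*((u n)+(u (n - 2))))))) := by
      funext x
      rw [hg]
      simp [Function.update_apply, (show ¬((n:ℤ) = (n - 4)) by omega), (show ¬(((n + 2):ℤ) = (n - 4)) by omega), (show ¬(((n - 2):ℤ) = (n - 4)) by omega), (show ¬(((n + 4):ℤ) = (n - 4)) by omega)]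
      try ring
    rw [e, dquad]
  have dg1 : deriv (fun x => g (Function.update u (n - 3) x) n) (u (n - 3)) = 2*(0)*(u (n - 3)) + (0) := by
    have e : (fun x => g (Function.update u (n - 3) x) n) = (fun x : ℝ => (0)*x^2 + ((0)*x + ((u n)*((u (n + 2))*((u (n + 4))+(u (n + 2))+(u n))-(u (n - 2))*((u n)+(u (n - 2))+(u (n - 4))))))) := by
      funext x
      rw [hg]
      simp [Function.update_apply, (show ¬((n:ℤ) = (n - 3)) by omega), (show ¬(((n + 2):ℤ) = (n - 3)) by omega), (show ¬(((n - 2):ℤ) = (n - 3)) by omega), (show ¬(((n + 4):ℤ) = (n - 3)) by omega), (show ¬(((n - 4):ℤ) = (n - 3)) by omega)]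
      try ring
    rw [e, dquad]
  have dg2 : deriv (fun x => g (Function.update u (n - 2) x) n) (u (n - 2)) = 2*(-(u n))*(u (n - 2)) + (-((u n)*((u n)+(u (n - 4))))) := by
    have e : (fun x => g (Function.update u (n - 2) x) n) = (fun x : ℝ => (-(u n))*x^2 + ((-((u n)*((u n)+(u (n - 4)))))*x + ((u n)*(u (n + 2))*((u (n + 4))+(u (n + 2))+(u n))))) := by
      funext x
      rw [hg]
      simp [Function.update_apply, (show ¬((n:ℤ) = (n - 2)) by omega), (show ¬(((n + 2):ℤ) = (n - 2)) by omega), (show ¬(((n + 4):ℤ) = (n - 2)) by omega), (show ¬(((n - 4):ℤ) = (n - 2)) by omega)]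
      try ring
    rw [e, dquad]
  have dg3 : deriv (fun x => g (Function.update u (n - 1) x) n) (u (n - 1)) = 2*(0)*(u (n - 1)) + (0) := by
    have e : (fun x => g (Function.update u (n - 1) x) n) = (fun x : ℝ => (0)*x^2 + ((0)*x + ((u n)*((u (n + 2))*((u (n + 4))+(u (n + 2))+(u n))-(u (n - 2))*((u n)+(u (n - 2))+(u (n - 4))))))) := by
      funext x
      rw [hg]
      simp [Function.update_apply, (show ¬((n:ℤ) = (n - 1)) by omega), (show ¬(((n + 2):ℤ) = (n - 1)) by omega), (show ¬(((n - 2):ℤ) = (n - 1)) by omega), (show ¬(((n + 4):ℤ) = (n - 1)) by omega), (show ¬(((n - 4):ℤ) = (n - 1)) by omega)]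
      try ring
    rw [e, dquad]
  have dg4 : deriv (fun x => g (Function.update u n x) n) (u n) = 2*((u (n + 2))-(u (n - 2)))*(u n) + ((u (n + 2))*((u (n + 4))+(u (n + 2)))-(u (n - 2))*((u (n - 2))+(u (n - 4)))) := by
    have e : (fun x => g (Function.update u n x) n) = (fun x : ℝ => ((u (n + 2))-(u (n - 2)))*x^2 + (((u (n + 2))*((u (n + 4))+(u (n + 2)))-(u (n - 2))*((u (n - 2))+(u (n - 4))))*x + (0))) := by
      funext x
      rw [hg]
      simp [Function.update_apply, (show ¬(((n + 2):ℤ) = n) by omega), (show ¬(((n - 2):ℤ) = n) by omega), (show ¬(((n + 4):ℤ) = n) by omega), (show ¬(((n - 4):ℤ) = n) by omega)]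
      try ring
    rw [e, dquad]
  have dg5 : deriv (fun x => g (Function.update u (n + 1) x) n) (u (n + 1)) = 2*(0)*(u (n + 1)) + (0) := by
    have e : (fun x => g (Function.update u (n + 1) x) n) = (fun x : ℝ => (0)*x^2 + ((0)*x + ((u n)*((u (n + 2))*((u (n + 4))+(u (n + 2))+(u n))-(u (n - 2))*((u n)+(u (n - 2))+(u (n - 4))))))) := by
      funext x
      rw [hg]
      simp [Function.update_apply, (show ¬((n:ℤ) = (n + 1)) by omega), (show ¬(((n + 2):ℤ) = (n + 1)) by omega), (show ¬(((n - 2):ℤ) = (n + 1)) by omega), (show ¬(((n + 4):ℤ) = (n + 1)) by omega), (show ¬(((n - 4):ℤ) = (n + 1)) by omega)]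
      try ring
    rw [e, dquad]
  have dg6 : deriv (fun x => g (Function.update u (n + 2) x) n) (u (n + 2)) = 2*((u n))*(u (n + 2)) + ((u n)*((u (n + 4))+(u n))) := by
    have e : (fun x => g (Function.update u (n + 2) x) n) = (fun x : ℝ => ((u n))*x^2 + (((u n)*((u (n + 4))+(u n)))*x + (-((u n)*(u (n - 2))*((u n)+(u (n - 2))+(u (n - 4))))))) := by
      funext x
      rw [hg]
      simp [Function.update_apply, (show ¬((n:ℤ) = (n + 2)) by omega), (show ¬(((n - 2):ℤ) = (n + 2)) by omega), (show ¬(((n + 4):ℤ) = (n + 2)) by omega), (show ¬(((n - 4):ℤ) = (n + 2)) by omega)]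
      try ring
    rw [e, dquad]
  have dg7 : deriv (fun x => g (Function.update u (n + 3) x) n) (u (n + 3)) = 2*(0)*(u (n + 3)) + (0) := by
    have e : (fun x => g (Function.update u (n + 3) x) n) = (fun x : ℝ => (0)*x^2 + ((0)*x + ((u n)*((u (n + 2))*((u (n + 4))+(u (n + 2))+(u n))-(u (n - 2))*((u n)+(u (n - 2))+(u (n - 4))))))) := by
      funext x
      rw [hg]
      simp [Function.update_apply, (show ¬((n:ℤ) = (n + 3)) by omega), (show ¬(((n + 2):ℤ) = (n + 3)) by omega), (show ¬(((n - 2):ℤ) = (n + 3)) by omega), (show ¬(((n + 4):ℤ) = (n + 3)) by omega), (show ¬(((n - 4):ℤ) = (n + 3)) by omega)]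
      try ring
    rw [e, dquad]
  have dg8 : deriv (fun x => g (Function.update u (n + 4) x) n) (u (n + 4)) = 2*(0)*(u (n + 4)) + ((u n)*(u (n + 2))) := by
    have e : (fun x => g (Function.update u (n + 4) x) n) = (fun x : ℝ => (0)*x^2 + (((u n)*(u (n + 2)))*x + ((u n)*((u (n + 2))*((u (n + 2))+(u n))-(u (n - 2))*((u n)+(u (n - 2))+(u (n - 4))))))) := by
      funext x
      rw [hg]
      simp [Function.update_apply, (show ¬((n:ℤ) = (n + 4)) by omega), (show ¬(((n + 2):ℤ) = (n + 4)) by omega), (show ¬(((n - 2):ℤ) = (n + 4)) by omega), (show ¬(((n - 4):ℤ) = (n + 4)) by omega)]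
      try ring
    rw [e, dquad]
  have df0 : deriv (fun x => f (Function.update u (n - 2) x) n) (u (n - 2)) = 2*(0)*(u (n - 2)) + (-(u n)) := by
    have e : (fun x => f (Function.update u (n - 2) x) n) = (fun x : ℝ => (0)*x^2 + ((-(u n))*x + ((u n)*(u (n + 2))))) := by
      funext x
      rw [hf]
      simp [Function.update_apply, (show ¬((n:ℤ) = (n - 2)) by omega), (show ¬(((n + 2):ℤ) = (n - 2)) by omega)]
      try ring
    rw [e, dquad]
  have df1 : deriv (fun x => f (Function.update u (n - 1) x) n) (u (n - 1)) = 2*(0)*(u (n - 1)) + (0) := by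
    have e : (fun x => f (Function.update u (n - 1) x) n) = (fun x : ℝ => (0)*x^2 + ((0)*x + ((u n)*((u (n + 2))-(u (n - 2)))))) := by
      funext x
      rw [hf]
      simp [Function.update_apply, (show ¬((n:ℤ) = (n - 1)) by omega), (show ¬(((n + 2):ℤ) = (n - 1)) by omega), (show ¬(((n - 2):ℤ) = (n - 1)) by omega)]
      try ring
    rw [e, dquad]
  have df2 : deriv (fun x => f (Function.update u n x) n) (u n) = 2*(0)*(u n) + ((u (n + 2))-(u (n - 2))) := by
    have e : (fun x => f (Function.update u n x) n) = (fun x : ℝ => (0)*x^2 + (((u (n + 2))-(u (n - 2)))*x + (0))) := by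
      funext x
      rw [hf]
      simp [Function.update_apply, (show ¬(((n + 2):ℤ) = n) by omega), (show ¬(((n - 2):ℤ) = n) by omega)]
      try ring
    rw [e, dquad]
  have df3 : deriv (fun x => f (Function.update u (n + 1) x) n) (u (n + 1)) = 2*(0)*(u (n + 1)) + (0) := by
    have e : (fun x => f (Function.update u (n + 1) x) n) = (fun x : ℝ => (0)*x^2 + ((0)*x + ((u n)*((u (n + 2))-(u (n - 2)))))) := by
      funext x
      rw [hf]
      simp [Function.update_apply, (show ¬((n:ℤ) = (n + 1)) by omega), (show ¬(((n + 2):ℤ) = (n + 1)) by omega), (show ¬(((n - 2):ℤ) = (n + 1)) by omega)]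
      try ring
    rw [e, dquad]
  have df4 : deriv (fun x => f (Function.update u (n + 2) x) n) (u (n + 2)) = 2*(0)*(u (n + 2)) + ((u n)) := by
    have e : (fun x => f (Function.update u (n + 2) x) n) = (fun x : ℝ => (0)*x^2 + (((u n))*x + (-((u n)*(u (n - 2)))))) := by
      funext x
      rw [hf]
      simp [Function.update_apply, (show ¬((n:ℤ) = (n + 2)) by omega), (show ¬(((n - 2):ℤ) = (n + 2)) by omega)]
      try ring
    rw [e, dquad]
  have hI4 : Finset.Icc (n - 4) (n + 4) =
      {n-4, n-3, n-2, n-1, n, n+1, n+2, n+3, n+4} := by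
    ext m
    simp only [Finset.mem_Icc, Finset.mem_insert, Finset.mem_singleton]
    omega
  have hI2 : Finset.Icc (n - 2) (n + 2) = {n-2, n-1, n, n+1, n+2} := by
    ext m
    simp only [Finset.mem_Icc, Finset.mem_insert, Finset.mem_singleton]
    omega
  rw [hI4, hI2]
  rw [Finset.sum_insert (by simp only [Finset.mem_insert, Finset.mem_singleton]; omega),
      Finset.sum_insert (by simp only [Finset.mem_insert, Finset.mem_singleton]; omega),
      Finset.sum_insert (by simp only [Finset.mem_insert, Finset.mem_singleton]; omega),
      Finset.sum_insert (by simp only [Finset.mem_insert, Finset.mem_singleton]; omega),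
      Finset.sum_insert (by simp only [Finset.mem_insert, Finset.mem_singleton]; omega),
      Finset.sum_insert (by simp only [Finset.mem_insert, Finset.mem_singleton]; omega),
      Finset.sum_insert (by simp only [Finset.mem_insert, Finset.mem_singleton]; omega),
      Finset.sum_insert (by simp only [Finset.mem_insert, Finset.mem_singleton]; omega),
      Finset.sum_singleton,
      Finset.sum_insert (by simp only [Finset.mem_insert, Finset.mem_singleton]; omega),
      Finset.sum_insert (by simp only [Finset.mem_insert, Finset.mem_singleton]; omega),
      Finset.sum_insert (by simp only [Finset.mem_insert, Finset.mem_singleton]; omega),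
      Finset.sum_insert (by simp only [Finset.mem_insert, Finset.mem_singleton]; omega),
      Finset.sum_singleton]
  rw [dg0, dg1, dg2, dg3, dg4, dg5, dg6, dg7, dg8, df0, df1, df2, df3, df4]
  simp only [hf, hg]
  ring
end
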